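/- Let S be an N×N Hermitian positive semidefinite complex matrix with eigenvalues λ_1(S) ≥ λ_2(S) ≥ … ≥ λ_N(S) listed in decreasing order with multiplicity, let 1 ≤ M ≤ N, let F ∈ ℂ^{N×M} satisfy FᴴF = I_M (semi-orthogonal), and let c > 0 be real. Then Tr(FᴴSF (c·FᴴSF + I_M)⁻¹) ≤ Σ_{i=1}^M λ_i(S) / (c·λ_i(S) + 1). -/

import Mathlib

/-!
Write `f(x) = x / (c x + 1)`, which is increasing on `[0, ∞)`. The trace is `Σ_j f(ν_j)` over the
eigenvalues `ν` of the compression `B = FᴴSF`, so it suffices to prove Cauchy interlacing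
`ν_i ≤ μ_i` for the decreasingly sorted eigenvalues. The span of the eigenvectors of `S` for
`μ_i, …, μ_{N-1}` has dimension `N - i`, and the image under `F` of the span of the eigenvectors
of `B` for `ν_0, …, ν_i` has dimension `i + 1`; so they share a nonzero vector `x`, and
`ν_i ‖x‖² ≤ xᴴSx ≤ μ_i ‖x‖²`.
-/

open Matrix Module
open scoped ComplexOrder

lemma monotoneOn_div_mul_add_one {c : ℝ} (hc : 0 ≤ c) :
    MonotoneOn (fun x : ℝ => x / (c * x + 1)) (Set.Ici 0) := by
  intro x (hx : 0 ≤ x) y (hy : 0 ≤ y) hxy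
  dsimp only
  rw [div_le_div_iff₀ (by positivity) (by positivity)]
  nlinarith

lemma exists_perm_antitone_comp {α : Type*} [LinearOrder α] {N : ℕ} (f : Fin N → α) :
    ∃ σ : Equiv.Perm (Fin N), Antitone (f ∘ σ) :=
  ⟨Tuple.sort (OrderDual.toDual ∘ f), Tuple.monotone_sort (OrderDual.toDual ∘ f)⟩

namespace Matrix

variable {n m k l : Type*} [Fintype n] [Fintype m] [Fintype k] [Fintype l]

lemma star_mulVec_dotProduct_mulVec (G : Matrix n k ℂ) (A : Matrix n n ℂ) (c : k → ℂ) :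
    star (G *ᵥ c) ⬝ᵥ (A *ᵥ (G *ᵥ c)) = star c ⬝ᵥ ((Gᴴ * A * G) *ᵥ c) := by
  rw [star_mulVec, mulVec_mulVec, ← dotProduct_mulVec, mulVec_mulVec, Matrix.mul_assoc]

lemma star_mulVec_dotProduct_mulVec_self [DecidableEq k] {G : Matrix n k ℂ} (hG : Gᴴ * G = 1)
    (c : k → ℂ) :
    star (G *ᵥ c) ⬝ᵥ (G *ᵥ c) = star c ⬝ᵥ c := by
  rw [star_mulVec, ← dotProduct_mulVec, mulVec_mulVec, hG, one_mulVec]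

lemma star_mulVec_dotProduct_le_of_conj_eq_diagonal [DecidableEq k] {A : Matrix n n ℂ}
    {G : Matrix n k ℂ} {d : k → ℝ} (hd : Gᴴ * A * G = diagonal fun j => (d j : ℂ))
    {a : ℝ} (hda : ∀ j, d j ≤ a) (c : k → ℂ) :
    star (G *ᵥ c) ⬝ᵥ (A *ᵥ (G *ᵥ c)) ≤ a * (star c ⬝ᵥ c) := by
  rw [star_mulVec_dotProduct_mulVec, hd, dotProduct, dotProduct, Finset.mul_sum]
  refine Finset.sum_le_sum fun j _ => ?_
  rw [mulVec_diagonal, Pi.star_apply, mul_left_comm]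
  exact mul_le_mul_of_nonneg_right (Complex.real_le_real.mpr (hda j)) (star_mul_self_nonneg _)

lemma le_star_mulVec_dotProduct_of_conj_eq_diagonal [DecidableEq k] {A : Matrix n n ℂ}
    {G : Matrix n k ℂ} {d : k → ℝ} (hd : Gᴴ * A * G = diagonal fun j => (d j : ℂ))
    {b : ℝ} (hbd : ∀ j, b ≤ d j) (c : k → ℂ) :
    b * (star c ⬝ᵥ c) ≤ star (G *ᵥ c) ⬝ᵥ (A *ᵥ (G *ᵥ c)) := by
  have hneg : Gᴴ * (-A) * G = diagonal fun j => ((-d j : ℝ) : ℂ) := by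
    simp [Matrix.mul_neg, Matrix.neg_mul, hd]
  have := star_mulVec_dotProduct_le_of_conj_eq_diagonal hneg (a := -b) (by simpa using hbd) c
  simpa [neg_mulVec, dotProduct_neg] using this

lemma finrank_range_mulVecLin_of_conjTranspose_mul_self_eq_one [DecidableEq k]
    {G : Matrix n k ℂ} (hG : Gᴴ * G = 1) :
    finrank ℂ (LinearMap.range G.mulVecLin) = Fintype.card k := by
  rw [← Matrix.rank, ← rank_conjTranspose_mul_self, hG, rank_one]

lemma exists_mulVec_eq_mulVec_ne_zero [DecidableEq k] [DecidableEq l]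
    {G₁ : Matrix n k ℂ} {G₂ : Matrix n l ℂ} (hG₁ : G₁ᴴ * G₁ = 1) (hG₂ : G₂ᴴ * G₂ = 1)
    (hcard : Fintype.card n < Fintype.card k + Fintype.card l) :
    ∃ c₁ c₂, G₁ *ᵥ c₁ = G₂ *ᵥ c₂ ∧ c₁ ≠ 0 := by
  set X := LinearMap.range G₁.mulVecLin
  set Y := LinearMap.range G₂.mulVecLin
  have hXY : X ⊓ Y ≠ ⊥ := by
    intro h
    have hsum := Submodule.finrank_sup_add_finrank_inf_eq X Y
    have hle := Submodule.finrank_le (X ⊔ Y)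
    rw [h, finrank_bot, finrank_range_mulVecLin_of_conjTranspose_mul_self_eq_one hG₁,
      finrank_range_mulVecLin_of_conjTranspose_mul_self_eq_one hG₂] at hsum
    rw [finrank_fintype_fun_eq_card] at hle
    omega
  obtain ⟨x, ⟨⟨c₁, hc₁⟩, ⟨c₂, hc₂⟩⟩, hx⟩ := Submodule.exists_mem_ne_zero_of_ne_bot hXY
  rw [mulVecLin_apply] at hc₁ hc₂
  exact ⟨c₁, c₂, hc₁.trans hc₂.symm, fun h => hx (by rw [← hc₁, h, mulVec_zero])⟩

namespace IsHermitian

variable [DecidableEq n] {A : Matrix n n ℂ} (hA : A.IsHermitian)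

lemma exists_conjTranspose_mul_self_eq_one_conj_eq_diagonal (s : Finset n) :
    ∃ G : Matrix n s ℂ, Gᴴ * G = 1 ∧
      Gᴴ * A * G = diagonal fun j : s => (hA.eigenvalues j : ℂ) := by
  set U : Matrix n n ℂ := (hA.eigenvectorUnitary : Matrix n n ℂ)
  have hU : Uᴴ * U = 1 := Unitary.coe_star_mul_self hA.eigenvectorUnitary
  have hUA : Uᴴ * A * U = diagonal fun j => (hA.eigenvalues j : ℂ) := by
    simpa [star_eq_conjTranspose, Function.comp_def] using
      hA.conjStarAlgAut_star_eigenvectorUnitary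
  set G : Matrix n s ℂ := U.submatrix id Subtype.val
  refine ⟨G, ?_, ?_⟩
  · rw [conjTranspose_submatrix, ← submatrix_mul _ _ _ _ _ Function.bijective_id, hU,
      submatrix_one _ Subtype.val_injective]
  · have hsub : (Uᴴ * A * U).submatrix Subtype.val Subtype.val = Gᴴ * A * G := by
      rw [submatrix_mul _ _ _ id _ Function.bijective_id,
        submatrix_mul _ _ _ id _ Function.bijective_id, submatrix_id_id, conjTranspose_submatrix]
    rw [← hsub, hUA, submatrix_diagonal _ _ Subtype.val_injective]
    rfl

theorem le_of_card_lt_card_add_card [DecidableEq m] {F : Matrix n m ℂ} (hF : Fᴴ * F = 1)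
    (hB : (Fᴴ * A * F).IsHermitian) {a b : ℝ} {s : Finset n} {t : Finset m}
    (hs : ∀ k ∈ s, hA.eigenvalues k ≤ a) (ht : ∀ j ∈ t, b ≤ hB.eigenvalues j)
    (hcard : Fintype.card n < s.card + t.card) : b ≤ a := by
  obtain ⟨G₁, hG₁, hAG₁⟩ := hA.exists_conjTranspose_mul_self_eq_one_conj_eq_diagonal s
  obtain ⟨G, hG, hBG⟩ := hB.exists_conjTranspose_mul_self_eq_one_conj_eq_diagonal t
  have hG₂ : (F * G)ᴴ * (F * G) = 1 := by
    rw [conjTranspose_mul, Matrix.mul_assoc, ← Matrix.mul_assoc Fᴴ, hF, Matrix.one_mul, hG]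
  have hAG₂ : (F * G)ᴴ * A * (F * G) = diagonal fun j : t => (hB.eigenvalues j : ℂ) := by
    rw [← hBG, conjTranspose_mul]
    simp only [Matrix.mul_assoc]
  obtain ⟨c₁, c₂, hc, hc₁⟩ :=
    exists_mulVec_eq_mulVec_ne_zero hG₁ hG₂ (by simpa only [Fintype.card_coe] using hcard)
  have hupper := star_mulVec_dotProduct_le_of_conj_eq_diagonal hAG₁ (fun j => hs j j.2) c₁
  have hlower := le_star_mulVec_dotProduct_of_conj_eq_diagonal hAG₂ (fun j => ht j j.2) c₂
  have hnorm : star c₂ ⬝ᵥ c₂ = star c₁ ⬝ᵥ c₁ := by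
    rw [← star_mulVec_dotProduct_mulVec_self hG₂, ← hc, star_mulVec_dotProduct_mulVec_self hG₁]
  rw [← hc, hnorm] at hlower
  exact Complex.real_le_real.mp <|
    le_of_mul_le_mul_right (hlower.trans hupper) (dotProduct_star_self_pos_iff.mpr hc₁)

end IsHermitian

lemma IsHermitian.eigenvalues_le_of_antitone {N M : ℕ} (hMN : M ≤ N)
    {A : Matrix (Fin N) (Fin N) ℂ} (hA : A.IsHermitian) {F : Matrix (Fin N) (Fin M) ℂ}
    (hF : Fᴴ * F = 1) (hB : (Fᴴ * A * F).IsHermitian)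
    {σ : Equiv.Perm (Fin N)} (hσ : Antitone (hA.eigenvalues ∘ σ))
    {τ : Equiv.Perm (Fin M)} (hτ : Antitone (hB.eigenvalues ∘ τ)) (i : Fin M) :
    hB.eigenvalues (τ i) ≤ hA.eigenvalues (σ (Fin.castLE hMN i)) := by
  refine hA.le_of_card_lt_card_add_card hF hB
    (s := (Finset.Ici (Fin.castLE hMN i)).map σ.toEmbedding)
    (t := (Finset.Iic i).map τ.toEmbedding) ?_ ?_ ?_
  · simp only [Finset.mem_map_equiv, Finset.mem_Ici]
    intro k hk
    simpa using hσ hk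
  · simp only [Finset.mem_map_equiv, Finset.mem_Iic]
    intro j hj
    simpa using hτ hj
  · simp only [Finset.card_map, Fin.card_Ici, Fin.card_Iic, Fintype.card_fin, Fin.val_castLE]
    omega

section Field

variable {α : Type*} [Field α] [DecidableEq n]

lemma inv_diagonal_of_ne_zero {v : n → α} (hv : ∀ i, v i ≠ 0) :
    (diagonal v)⁻¹ = diagonal v⁻¹ :=
  inv_eq_left_inv <| by
    rw [diagonal_mul_diagonal, ← diagonal_one]
    exact congrArg diagonal (funext fun i => inv_mul_cancel₀ (hv i))

lemma conjStarAlgAut_inv [StarRing α] (U : unitaryGroup n α) (X : Matrix n n α) :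
    (Unitary.conjStarAlgAut α _ U X)⁻¹ = Unitary.conjStarAlgAut α _ U X⁻¹ := by
  rw [Unitary.conjStarAlgAut_apply, Unitary.conjStarAlgAut_apply, Matrix.mul_inv_rev,
    Matrix.mul_inv_rev, inv_eq_left_inv (Unitary.mul_star_self_of_mem U.prop),
    inv_eq_left_inv (Unitary.star_mul_self_of_mem U.prop), Matrix.mul_assoc]

lemma trace_conjStarAlgAut [StarRing α] (U : unitaryGroup n α) (X : Matrix n n α) :
    trace (Unitary.conjStarAlgAut α _ U X) = trace X := by
  rw [Unitary.conjStarAlgAut_apply, trace_mul_cycle, Unitary.coe_star_mul_self, Matrix.one_mul]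

end Field

lemma IsHermitian.trace_mul_inv_smul_add_one [DecidableEq n] {B : Matrix n n ℂ}
    (hB : B.IsHermitian) {c : ℝ} (hc : ∀ j, c * hB.eigenvalues j + 1 ≠ 0) :
    trace (B * ((c : ℂ) • B + 1)⁻¹)
      = ((∑ j, hB.eigenvalues j / (c * hB.eigenvalues j + 1) : ℝ) : ℂ) := by
  set φ := Unitary.conjStarAlgAut ℂ (Matrix n n ℂ) hB.eigenvectorUnitary
  set D : Matrix n n ℂ := diagonal fun j => (hB.eigenvalues j : ℂ)
  have hBD : B = φ D := hB.spectral_theorem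
  have hshift : (c : ℂ) • D + 1 = diagonal fun j => ((c * hB.eigenvalues j + 1 : ℝ) : ℂ) := by
    rw [← diagonal_one, ← diagonal_smul, diagonal_add]
    push_cast
    rfl
  have hinv : ((c : ℂ) • D + 1)⁻¹ = diagonal fun j => ((c * hB.eigenvalues j + 1 : ℝ) : ℂ)⁻¹ := by
    rw [hshift, inv_diagonal_of_ne_zero fun j => Complex.ofReal_ne_zero.mpr (hc j)]
    rfl
  conv_lhs => rw [hBD]
  rw [← map_one φ, ← map_smul, ← map_add, conjStarAlgAut_inv, ← map_mul,
    trace_conjStarAlgAut, hinv, diagonal_mul_diagonal, trace_diagonal]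
  push_cast
  rfl

end Matrix

theorem stmt6_general (N M : ℕ) (hMN : M ≤ N)
    (S : Matrix (Fin N) (Fin N) ℂ) (hS : S.PosSemidef)
    (μ : Fin N → ℝ) (hμdec : ∀ i j : Fin N, i ≤ j → μ j ≤ μ i)
    (hμ : ∃ σ : Equiv.Perm (Fin N), μ = hS.1.eigenvalues ∘ σ)
    (F : Matrix (Fin N) (Fin M) ℂ) (hF : Fᴴ * F = 1)
    (c : ℝ) (hc : 0 < c) :
    ∃ r : ℝ,
      Matrix.trace ((Fᴴ * S * F) * ((c : ℂ) • (Fᴴ * S * F) + 1)⁻¹) = (r : ℂ) ∧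
      r ≤ ∑ i : Fin M, μ (Fin.castLE hMN i) / (c * μ (Fin.castLE hMN i) + 1) := by
  obtain ⟨σ, rfl⟩ := hμ
  have hB := hS.conjTranspose_mul_mul_same F
  have hshift (j : Fin M) : 0 < c * hB.1.eigenvalues j + 1 := by
    have := hB.eigenvalues_nonneg j
    positivity
  obtain ⟨τ, hτ⟩ := exists_perm_antitone_comp hB.1.eigenvalues
  refine ⟨_, hB.1.trace_mul_inv_smul_add_one fun j => (hshift j).ne', ?_⟩
  rw [← Equiv.sum_comp τ]
  exact Finset.sum_le_sum fun i _ =>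
    monotoneOn_div_mul_add_one hc.le (hB.eigenvalues_nonneg _) (hS.eigenvalues_nonneg _)
      (hS.1.eigenvalues_le_of_antitone hMN hF hB.1 hμdec hτ i)

/-- interlacing bound for the compressed resolvent trace.
Let `S` be an `N×N` Hermitian positive semidefinite complex matrix whose
eigenvalues, listed in decreasing order with multiplicity, are `μ 0 ≥ μ 1 ≥ …`
(`μ` is a decreasing rearrangement of the eigenvalues of `S`).  For every
semi-orthogonal `F ∈ ℂ^{N×M}` (`FᴴF = I`, `1 ≤ M ≤ N`) and real `c > 0`,
`Tr(FᴴSF (c FᴴSF + I)⁻¹) ≤ Σ_{i<M} μ i / (c μ i + 1)`. -/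
theorem stmt6 (N M : ℕ) (hM : 1 ≤ M) (hMN : M ≤ N)
    (S : Matrix (Fin N) (Fin N) ℂ) (hS : S.PosSemidef)
    (μ : Fin N → ℝ) (hμdec : ∀ i j : Fin N, i ≤ j → μ j ≤ μ i)
    (hμ : ∃ σ : Equiv.Perm (Fin N), μ = hS.1.eigenvalues ∘ σ)
    (F : Matrix (Fin N) (Fin M) ℂ) (hF : Fᴴ * F = 1)
    (c : ℝ) (hc : 0 < c) :
    ∃ r : ℝ,
      Matrix.trace ((Fᴴ * S * F) * ((c : ℂ) • (Fᴴ * S * F) + 1)⁻¹) = (r : ℂ) ∧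
      r ≤ ∑ i : Fin M, μ (Fin.castLE hMN i) / (c * μ (Fin.castLE hMN i) + 1) :=
  stmt6_general N M hMN S hS μ hμdec hμ F hF c hc
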